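/- Let A be an abelian category with enough projectives and enough injectives, and let t₁ = (T₁,F₁) and t₂ = (T₂,F₂) be torsion pairs in A with T₁ ⊆ T₂ such that T₁, F₁, T₂, F₂ are all functorially finite in A. Set H = T₂ ∩ F₁. Then the maps Φ(T,F) = (T ∩ F₁, T₂ ∩ F) and Ψ(X,Y) = (T₁∗X, Y∗F₂) restrict to mutually inverse, order-preserving bijections between the set of torsion pairs (T,F) in A with T₁ ⊆ T ⊆ T₂ such that T and F are functorially finite in A, and the set of torsion pairs (X,Y) in H such that X and Y are functorially finite in the full subcategory on H. -/

import Mathlib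

open CategoryTheory Limits

universe v u

variable (A : Type u) [Category.{v} A] [Abelian A]

/-- A class of objects closed under isomorphisms. -/
def IsoClosed (S : Set A) : Prop := ∀ ⦃X Y : A⦄, (X ≅ Y) → X ∈ S → Y ∈ S

/-- `f`, `g` form a short exact sequence `0 → X → Y → Z → 0`. -/
def IsSES {X Y Z : A} (f : X ⟶ Y) (g : Y ⟶ Z) : Prop :=
  ∃ w : f ≫ g = 0, (ShortComplex.mk f g w).ShortExact

/-- A torsion pair in the abelian category `A`: a pair of iso-closed classes with
`Hom(T, F) = 0` such that every object sits in a short exact sequence with kernel in `T`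
and cokernel in `F`. -/
def IsTorsionPair (T F : Set A) : Prop :=
  IsoClosed A T ∧ IsoClosed A F ∧
  (∀ X ∈ T, ∀ Y ∈ F, ∀ f : X ⟶ Y, f = 0) ∧
  (∀ M : A, ∃ (X Y : A) (f : X ⟶ M) (g : M ⟶ Y), IsSES A f g ∧ X ∈ T ∧ Y ∈ F)

/-- `star X Y` is the class of objects `M` admitting a short exact sequence
`0 → B → M → C → 0` with `B ∈ X` and `C ∈ Y`. -/
def star (X Y : Set A) : Set A :=
  {M : A | ∃ (B C : A) (f : B ⟶ M) (g : M ⟶ C), IsSES A f g ∧ B ∈ X ∧ C ∈ Y}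

/-- A torsion pair in a class `H` of objects of `A`: a pair of iso-closed subclasses
`(X, Y)` of `H` such that `Hom(X, Y) = 0` and every object of `H` sits in a short exact
sequence with kernel in `X` and cokernel in `Y`. -/
def IsTorsionPairIn (H X Y : Set A) : Prop :=
  X ⊆ H ∧ Y ⊆ H ∧ IsoClosed A X ∧ IsoClosed A Y ∧
  (∀ B ∈ X, ∀ C ∈ Y, ∀ f : B ⟶ C, f = 0) ∧
  (∀ H₀ ∈ H, ∃ (B C : A) (f : B ⟶ H₀) (g : H₀ ⟶ C),
    IsSES A f g ∧ B ∈ X ∧ C ∈ Y)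

/-- `X` admits a right `C`-approximation: a morphism `f : C₀ ⟶ X` with `C₀ ∈ C` through
which every morphism from an object of `C` to `X` factors. -/
def HasRightApprox (C : Set A) (X : A) : Prop :=
  ∃ (C₀ : A) (f : C₀ ⟶ X), C₀ ∈ C ∧
    ∀ C' ∈ C, ∀ g : C' ⟶ X, ∃ h : C' ⟶ C₀, h ≫ f = g

/-- `X` admits a left `C`-approximation: a morphism `f : X ⟶ C₀` with `C₀ ∈ C` through
which every morphism from `X` to an object of `C` factors. -/
def HasLeftApprox (C : Set A) (X : A) : Prop :=
  ∃ (C₀ : A) (f : X ⟶ C₀), C₀ ∈ C ∧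
    ∀ C' ∈ C, ∀ g : X ⟶ C', ∃ h : C₀ ⟶ C', f ≫ h = g

/-- `C` is functorially finite in `A`: every object of `A` admits a right and a left
`C`-approximation. -/
def FunctoriallyFinite (C : Set A) : Prop :=
  ∀ X : A, HasRightApprox A C X ∧ HasLeftApprox A C X

/-- `C` is functorially finite in the full subcategory on `H`: every object of `H` admits
a right and a left `C`-approximation. -/
def FunctoriallyFiniteIn (H C : Set A) : Prop :=
  ∀ X ∈ H, HasRightApprox A C X ∧ HasLeftApprox A C X

/-!
Φ and Ψ are mutually inverse because `T₁ ∗ (T ∩ F₁) = T` and `(T₂ ∩ F) ∗ F₂ = F` (split an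
object by `t₁`, resp. `t₂`), while conversely an object of `(T₁ ∗ X) ∩ F₁` has its `T₁`-part
zero. That `(T₁ ∗ X, Y ∗ F₂)` is a torsion pair follows by splitting an object successively by
`t₂`, by `t₁` and by `(X, Y)`, and regrouping with Noether's isomorphism theorems.

For functorial finiteness, `T ∩ F'` is functorially finite whenever `T` is a torsion class and
`F'` a torsion-free class that are: approximate by `T`, then pass to the `F'`-quotient (and
dually). Hence the heart is functorially finite, so are `X` and `Y` in `A`, and it remains to
see that extensions `S₁ ∗ S₂` of covariantly finite classes are covariantly finite. Given a
left `S₂`-approximation `M ⟶ x₀`, pull a projective presentation `0 → K → P → x₀ → 0` back to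
`0 → K → Q → M → 0`, and push it out along `K → Q → a₀`, a left `S₁`-approximation of `Q`:
the resulting extension of `x₀` by `a₀` receives a left `S₁ ∗ S₂`-approximation of `M`.
Right approximations are dual, using injective copresentations.
-/

section ShortExact

variable {A}

namespace IsSES

variable {X Y Z : A} {f : X ⟶ Y} {g : Y ⟶ Z}

lemma w (h : IsSES A f g) : f ≫ g = 0 := h.1

lemma mono (h : IsSES A f g) : Mono f := h.2.mono_f

lemma epi (h : IsSES A f g) : Epi g := h.2.epi_g

lemma exists_lift (h : IsSES A f g) {W : A} (k : W ⟶ Y) (hk : k ≫ g = 0) :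
    ∃ l : W ⟶ X, l ≫ f = k :=
  have := h.mono
  h.2.exact.lift' k hk

lemma exists_desc (h : IsSES A f g) {W : A} (k : Y ⟶ W) (hk : f ≫ k = 0) :
    ∃ l : Z ⟶ W, g ≫ l = k :=
  have := h.epi
  h.2.exact.desc' k hk

lemma isIso_g (h : IsSES A f g) (hX : IsZero X) : IsIso g :=
  have := h.epi
  have : Mono g := h.2.exact.mono_g (hX.eq_of_src f 0)
  isIso_of_mono_of_epi g

lemma isIso_f (h : IsSES A f g) (hZ : IsZero Z) : IsIso f :=
  have := h.mono
  have : Epi f := h.2.exact.epi_f (hZ.eq_of_tgt g 0)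
  isIso_of_mono_of_epi f

lemma of_exact_up_to_refinements (w : f ≫ g = 0) [Mono f] [Epi g]
    (hex : ∀ ⦃V : A⦄ (z : V ⟶ Y), z ≫ g = 0 →
      ∃ (V' : A) (π : V' ⟶ V) (_ : Epi π) (l : V' ⟶ X), π ≫ z = l ≫ f) :
    IsSES A f g :=
  ⟨w, .mk' ((ShortComplex.mk f g w).exact_iff_exact_up_to_refinements.2 hex) ‹_› ‹_›⟩

lemma comp_iso (h : IsSES A f g) {Y' : A} (e : Y ≅ Y') : IsSES A (f ≫ e.hom) (e.inv ≫ g) :=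
  ⟨by simp [h.w], ShortComplex.shortExact_of_iso
    (ShortComplex.isoMk (Iso.refl X) e (Iso.refl Z) (by simp) (by simp)) h.2⟩

lemma baseChange (h : IsSES A f g) {W : A} (p : W ⟶ Z) :
    ∃ j : X ⟶ pullback g p, IsSES A j (pullback.snd g p) ∧ j ≫ pullback.fst g p = f := by
  have := h.mono
  have := h.epi
  let j : X ⟶ pullback g p := pullback.lift f 0 (by rw [h.w, zero_comp])
  have : Mono j := mono_of_mono_fac (pullback.lift_fst _ _ _)
  refine ⟨j, of_exact_up_to_refinements (pullback.lift_snd _ _ _) fun V z hz => ?_,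
    pullback.lift_fst _ _ _⟩
  obtain ⟨l, hl⟩ := h.exists_lift (z ≫ pullback.fst g p)
    (by rw [Category.assoc, pullback.condition, reassoc_of% hz, zero_comp])
  refine ⟨V, 𝟙 V, inferInstance, l, ?_⟩
  ext <;> simp only [j, Category.id_comp, Category.assoc, pullback.lift_fst, pullback.lift_snd,
    hl, hz, comp_zero]

lemma cobaseChange (h : IsSES A f g) {W : A} (p : X ⟶ W) :
    ∃ q : pushout p f ⟶ Z, IsSES A (pushout.inl p f) q ∧ pushout.inr p f ≫ q = g := by
  have := h.mono
  have := h.epi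
  let q : pushout p f ⟶ Z := pushout.desc 0 g (by rw [comp_zero, h.w])
  have : Epi q := epi_of_epi_fac (pushout.inr_desc _ _ _)
  refine ⟨q, of_exact_up_to_refinements (pushout.inl_desc _ _ _) fun V z hz => ?_,
    pushout.inr_desc _ _ _⟩
  obtain ⟨V', π, _, x₂, x₃, hπ⟩ := (IsPushout.of_hasPushout p f).hom_eq_add_up_to_refinements z
  have hx₃ : x₃ ≫ g = 0 := by
    have := π ≫= hz
    rwa [← Category.assoc, hπ, Preadditive.add_comp, Category.assoc, Category.assoc,
      pushout.inl_desc, pushout.inr_desc, comp_zero, zero_add, comp_zero] at this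
  obtain ⟨l, hl⟩ := h.exists_lift x₃ hx₃
  refine ⟨V', π, inferInstance, x₂ + l ≫ p, ?_⟩
  rw [hπ, ← hl, Preadditive.add_comp, Category.assoc, Category.assoc, pushout.condition]

end IsSES

lemma isSES_kernel {Y Z : A} (g : Y ⟶ Z) [Epi g] : IsSES A (kernel.ι g) g :=
  ⟨kernel.condition g,
    .mk' (ShortComplex.exact_of_f_is_kernel _ (kernelIsKernel g)) inferInstance inferInstance⟩

lemma isSES_cokernel {X Y : A} (f : X ⟶ Y) [Mono f] : IsSES A f (cokernel.π f) :=
  ⟨cokernel.condition f,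
    .mk' (ShortComplex.exact_of_g_is_cokernel _ (cokernelIsCokernel f)) inferInstance
      inferInstance⟩

lemma isSES_id_zero (X : A) {Z : A} (hZ : IsZero Z) : IsSES A (𝟙 X) (0 : X ⟶ Z) :=
  have : Epi (0 : X ⟶ Z) := ⟨fun u v _ => hZ.eq_of_src u v⟩
  ⟨by simp, .mk' ((ShortComplex.exact_iff_epi _ rfl).2 inferInstance) inferInstance
    inferInstance⟩

lemma isSES_zero_id (X : A) {Z : A} (hZ : IsZero Z) : IsSES A (0 : Z ⟶ X) (𝟙 X) :=
  have : Mono (0 : Z ⟶ X) := ⟨fun u v _ => hZ.eq_of_tgt u v⟩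
  ⟨by simp, .mk' ((ShortComplex.exact_iff_mono _ rfl).2 inferInstance) inferInstance
    inferInstance⟩

/-- Noether's third isomorphism theorem: for `U ⊆ T ⊆ M`, `0 → T/U → M/U → M/T → 0`. -/
lemma exists_isSES_third_iso {U T M Q₁ Q₂ Q₃ : A} {i : U ⟶ T} {j : T ⟶ M}
    {p₁ : T ⟶ Q₁} {p₂ : M ⟶ Q₂} {p₃ : M ⟶ Q₃}
    (h₁ : IsSES A i p₁) (h₂ : IsSES A (i ≫ j) p₂) (h₃ : IsSES A j p₃) :
    ∃ (a : Q₁ ⟶ Q₂) (b : Q₂ ⟶ Q₃), IsSES A a b ∧ p₁ ≫ a = j ≫ p₂ ∧ p₂ ≫ b = p₃ := by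
  have := h₁.epi
  have := h₂.epi
  have := h₃.mono
  obtain ⟨a, ha⟩ := h₁.exists_desc (j ≫ p₂) (by rw [← Category.assoc, h₂.w])
  obtain ⟨b, hb⟩ := h₂.exists_desc p₃ (by rw [Category.assoc, h₃.w, comp_zero])
  have := h₃.epi
  have : Epi b := epi_of_epi_fac hb
  have : Mono a := by
    refine Preadditive.mono_of_cancel_zero _ fun {V} z hz => ?_
    obtain ⟨V', π, _, t, ht⟩ := surjective_up_to_refinements_of_epi p₁ z
    obtain ⟨v, hv⟩ := h₂.exists_lift (t ≫ j) (by
      rw [Category.assoc, ← ha, ← Category.assoc, ← ht, Category.assoc, hz, comp_zero])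
    have hvt : v ≫ i = t := by rw [← cancel_mono j, Category.assoc, hv]
    rw [← cancel_epi π, ht, ← hvt, Category.assoc, h₁.w, comp_zero, comp_zero]
  refine ⟨a, b, IsSES.of_exact_up_to_refinements ?_ fun V z hz => ?_, ha, hb⟩
  · rw [← cancel_epi p₁, reassoc_of% ha, hb, h₃.w, comp_zero]
  · obtain ⟨V', π, _, m, hm⟩ := surjective_up_to_refinements_of_epi p₂ z
    obtain ⟨v, hv⟩ := h₃.exists_lift m (by
      rw [← hb, ← Category.assoc, ← hm, Category.assoc, hz, comp_zero])
    exact ⟨V', π, inferInstance, v ≫ p₁, by rw [hm, ← hv, Category.assoc, Category.assoc, ha]⟩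

/-- The dual of the third isomorphism theorem: for epimorphisms `t ↠ h ↠ y`,
`0 → ker (t ↠ h) → ker (t ↠ y) → ker (h ↠ y) → 0`. -/
lemma exists_isSES_kernel_comp {a t h x y K : A} {f₁ : a ⟶ t} {g₁ : t ⟶ h} {f₂ : x ⟶ h}
    {g₂ : h ⟶ y} {ι : K ⟶ t}
    (h₁ : IsSES A f₁ g₁) (h₂ : IsSES A f₂ g₂) (h₃ : IsSES A ι (g₁ ≫ g₂)) :
    ∃ (α : a ⟶ K) (β : K ⟶ x), IsSES A α β ∧ α ≫ ι = f₁ ∧ ι ≫ g₁ = β ≫ f₂ := by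
  have := h₁.epi
  have := h₁.mono
  have := h₂.mono
  have := h₃.mono
  obtain ⟨β, hβ⟩ := h₂.exists_lift (ι ≫ g₁) (by rw [Category.assoc, h₃.w])
  obtain ⟨α, hα⟩ := h₃.exists_lift f₁ (by rw [reassoc_of% h₁.w, zero_comp])
  have : Mono α := mono_of_mono_fac hα
  have : Epi β := by
    refine (epi_iff_surjective_up_to_refinements β).2 fun V z => ?_
    obtain ⟨V', π, _, s, hs⟩ := surjective_up_to_refinements_of_epi g₁ (z ≫ f₂)
    obtain ⟨k, hk⟩ := h₃.exists_lift s (by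
      rw [← Category.assoc, ← hs, Category.assoc, Category.assoc, h₂.w, comp_zero, comp_zero])
    refine ⟨V', π, inferInstance, k, ?_⟩
    rw [← cancel_mono f₂, Category.assoc, hs, Category.assoc, hβ, ← hk, Category.assoc]
  refine ⟨α, β, IsSES.of_exact_up_to_refinements ?_ fun V z hz => ?_, hα, hβ.symm⟩
  · rw [← cancel_mono f₂, Category.assoc, hβ, reassoc_of% hα, h₁.w, zero_comp]
  · obtain ⟨l, hl⟩ := h₁.exists_lift (z ≫ ι) (by
      rw [Category.assoc, ← hβ, reassoc_of% hz, zero_comp])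
    refine ⟨V, 𝟙 V, inferInstance, l, ?_⟩
    rw [← cancel_mono ι, Category.id_comp, Category.assoc, hα, hl]

end ShortExact

section TorsionPair

variable {A}

def HomZero (S R : Set A) : Prop := ∀ X ∈ S, ∀ Y ∈ R, ∀ f : X ⟶ Y, f = 0

lemma HomZero.mono {S S' R R' : Set A} (h : HomZero S' R') (hS : S ⊆ S') (hR : R ⊆ R') :
    HomZero S R :=
  fun X hX Y hY => h X (hS hX) Y (hR hY)

lemma HomZero.star_left {S₁ S₂ R : Set A} (h₁ : HomZero S₁ R) (h₂ : HomZero S₂ R) :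
    HomZero (star A S₁ S₂) R := by
  rintro M ⟨B, C, f, g, hs, hB, hC⟩ N hN φ
  obtain ⟨ψ, rfl⟩ := hs.exists_desc φ (h₁ B hB N hN _)
  rw [h₂ C hC N hN ψ, comp_zero]

lemma HomZero.star_right {S R₁ R₂ : Set A} (h₁ : HomZero S R₁) (h₂ : HomZero S R₂) :
    HomZero S (star A R₁ R₂) := by
  rintro M hM N ⟨B, C, f, g, hs, hB, hC⟩ φ
  obtain ⟨ψ, rfl⟩ := hs.exists_lift φ (h₂ M hM C hC _)
  rw [h₁ M hM B hB ψ, zero_comp]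

lemma star_isoClosed (S₁ S₂ : Set A) : IsoClosed A (star A S₁ S₂) := by
  rintro M M' e ⟨B, C, f, g, hs, hB, hC⟩
  exact ⟨B, C, _, _, hs.comp_iso e, hB, hC⟩

lemma subset_star_left {S₁ S₂ : Set A} {Z : A} (hZ : IsZero Z) (hZS₂ : Z ∈ S₂) :
    S₁ ⊆ star A S₁ S₂ :=
  fun M hM => ⟨M, Z, 𝟙 M, 0, isSES_id_zero M hZ, hM, hZS₂⟩

lemma subset_star_right {S₁ S₂ : Set A} {Z : A} (hZ : IsZero Z) (hZS₁ : Z ∈ S₁) :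
    S₂ ⊆ star A S₁ S₂ :=
  fun M hM => ⟨Z, M, 0, 𝟙 M, isSES_zero_id M hZ, hZS₁, hM⟩

lemma star_mono_right {S₁ S₂ S₂' : Set A} (h : S₂ ⊆ S₂') : star A S₁ S₂ ⊆ star A S₁ S₂' :=
  fun _ ⟨B, C, f, g, hs, hB, hC⟩ => ⟨B, C, f, g, hs, hB, h hC⟩

namespace IsTorsionPair

variable {T F : Set A} (h : IsTorsionPair A T F)
include h

lemma homZero : HomZero T F := h.2.2.1

lemma exists_isSES (M : A) :
    ∃ (X Y : A) (f : X ⟶ M) (g : M ⟶ Y), IsSES A f g ∧ X ∈ T ∧ Y ∈ F :=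
  h.2.2.2 M

lemma mem_torsion_iff {M : A} : M ∈ T ↔ ∀ N ∈ F, ∀ φ : M ⟶ N, φ = 0 := by
  refine ⟨fun hM => h.homZero M hM, fun hM => ?_⟩
  obtain ⟨X, Y, f, g, hs, hX, hY⟩ := h.exists_isSES M
  have := hs.epi
  have := hs.isIso_f (IsZero.of_epi_eq_zero g (hM Y hY g))
  exact h.1 (asIso f) hX

lemma mem_torsionFree_iff {M : A} : M ∈ F ↔ ∀ N ∈ T, ∀ φ : N ⟶ M, φ = 0 := by
  refine ⟨fun hM N hN => h.homZero N hN M hM, fun hM => ?_⟩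
  obtain ⟨X, Y, f, g, hs, hX, hY⟩ := h.exists_isSES M
  have := hs.mono
  have := hs.isIso_g (IsZero.of_mono_eq_zero f (hM X hX f))
  exact h.2.1 (asIso g).symm hY

lemma mem_torsion_of_epi {M Q : A} (g : M ⟶ Q) [Epi g] (hM : M ∈ T) : Q ∈ T :=
  h.mem_torsion_iff.2 fun N hN φ => zero_of_epi_comp g (h.homZero M hM N hN (g ≫ φ))

lemma mem_torsionFree_of_mono {S M : A} (f : S ⟶ M) [Mono f] (hM : M ∈ F) : S ∈ F :=
  h.mem_torsionFree_iff.2 fun N hN φ => zero_of_comp_mono f (h.homZero N hN M hM (φ ≫ f))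

lemma star_subset_torsion {S₁ S₂ : Set A} (h₁ : S₁ ⊆ T) (h₂ : S₂ ⊆ T) : star A S₁ S₂ ⊆ T :=
  fun _ hM => h.mem_torsion_iff.2 <|
    (HomZero.star_left (h.homZero.mono h₁ subset_rfl) (h.homZero.mono h₂ subset_rfl)) _ hM

lemma star_subset_torsionFree {S₁ S₂ : Set A} (h₁ : S₁ ⊆ F) (h₂ : S₂ ⊆ F) :
    star A S₁ S₂ ⊆ F :=
  fun _ hM => h.mem_torsionFree_iff.2 fun N hN =>
    (HomZero.star_right (h.homZero.mono subset_rfl h₁) (h.homZero.mono subset_rfl h₂)) N hN _ hM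

lemma zero_mem_torsion {Z : A} (hZ : IsZero Z) : Z ∈ T :=
  h.mem_torsion_iff.2 fun _ _ _ => hZ.eq_of_src _ _

lemma zero_mem_torsionFree {Z : A} (hZ : IsZero Z) : Z ∈ F :=
  h.mem_torsionFree_iff.2 fun _ _ _ => hZ.eq_of_tgt _ _

lemma isZero_of_mem_of_mem {M : A} (hT : M ∈ T) (hF : M ∈ F) : IsZero M :=
  (IsZero.iff_id_eq_zero M).2 (h.homZero M hT M hF (𝟙 M))

lemma torsionFree_subset {T' F' : Set A} (h' : IsTorsionPair A T' F') (hTT' : T ⊆ T') :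
    F' ⊆ F :=
  fun _ hM => h.mem_torsionFree_iff.2 fun N hN => h'.homZero N (hTT' hN) _ hM

lemma hasRightApprox_torsion (M : A) : HasRightApprox A T M := by
  obtain ⟨X, Y, f, g, hs, hX, hY⟩ := h.exists_isSES M
  exact ⟨X, f, hX, fun C hC φ => hs.exists_lift φ (h.homZero C hC Y hY _)⟩

lemma hasLeftApprox_torsionFree (M : A) : HasLeftApprox A F M := by
  obtain ⟨X, Y, f, g, hs, hX, hY⟩ := h.exists_isSES M
  exact ⟨Y, g, hY, fun C hC φ => hs.exists_desc φ (h.homZero X hX C hC _)⟩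

end IsTorsionPair

end TorsionPair

section Approximation

variable {A}

section

omit [Abelian A]

lemma HasLeftApprox.trans {S S' : Set A} (hSS' : S ⊆ S') {M : A} (hM : HasLeftApprox A S' M)
    (h : ∀ C ∈ S', HasLeftApprox A S C) : HasLeftApprox A S M := by
  obtain ⟨C, f, hC, hf⟩ := hM
  obtain ⟨D, g, hD, hg⟩ := h C hC
  refine ⟨D, f ≫ g, hD, fun D' hD' φ => ?_⟩
  obtain ⟨ψ, rfl⟩ := hf D' (hSS' hD') φ
  obtain ⟨ρ, rfl⟩ := hg D' hD' ψ
  exact ⟨ρ, Category.assoc _ _ _⟩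

lemma HasRightApprox.trans {S S' : Set A} (hSS' : S ⊆ S') {M : A} (hM : HasRightApprox A S' M)
    (h : ∀ C ∈ S', HasRightApprox A S C) : HasRightApprox A S M := by
  obtain ⟨C, f, hC, hf⟩ := hM
  obtain ⟨D, g, hD, hg⟩ := h C hC
  refine ⟨D, g ≫ f, hD, fun D' hD' φ => ?_⟩
  obtain ⟨ψ, rfl⟩ := hf D' (hSS' hD') φ
  obtain ⟨ρ, rfl⟩ := hg D' hD' ψ
  exact ⟨ρ, (Category.assoc _ _ _).symm⟩

lemma FunctoriallyFiniteIn.functoriallyFinite {H C : Set A} (hC : FunctoriallyFiniteIn A H C)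
    (hCH : C ⊆ H) (hH : FunctoriallyFinite A H) : FunctoriallyFinite A C :=
  fun M => ⟨(hH M).1.trans hCH fun D hD => (hC D hD).1, (hH M).2.trans hCH fun D hD => (hC D hD).2⟩

lemma FunctoriallyFinite.functoriallyFiniteIn {C : Set A} (hC : FunctoriallyFinite A C)
    (H : Set A) : FunctoriallyFiniteIn A H C :=
  fun M _ => hC M

end

namespace IsTorsionPair

variable {T F S : Set A}

lemma hasLeftApprox_inter (h : IsTorsionPair A T F)
    (hS : ∀ {N Q : A} (g : N ⟶ Q) [Epi g], N ∈ S → Q ∈ S) {M : A} (hM : HasLeftApprox A S M) :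
    HasLeftApprox A (S ∩ F) M := by
  obtain ⟨C₀, ℓ, hC₀, hℓ⟩ := hM
  obtain ⟨B, C, f, g, hs, hB, hC⟩ := h.exists_isSES C₀
  have := hs.epi
  refine ⟨C, ℓ ≫ g, ⟨hS g hC₀, hC⟩, fun C' hC' φ => ?_⟩
  obtain ⟨ψ, rfl⟩ := hℓ C' hC'.1 φ
  obtain ⟨ρ, rfl⟩ := hs.exists_desc ψ (h.homZero B hB C' hC'.2 _)
  exact ⟨ρ, Category.assoc _ _ _⟩

lemma hasRightApprox_inter (h : IsTorsionPair A T F)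
    (hS : ∀ {N Q : A} (f : N ⟶ Q) [Mono f], Q ∈ S → N ∈ S) {M : A} (hM : HasRightApprox A S M) :
    HasRightApprox A (T ∩ S) M := by
  obtain ⟨C₀, r, hC₀, hr⟩ := hM
  obtain ⟨B, C, f, g, hs, hB, hC⟩ := h.exists_isSES C₀
  have := hs.mono
  refine ⟨B, f ≫ r, ⟨hB, hS f hC₀⟩, fun C' hC' φ => ?_⟩
  obtain ⟨ψ, rfl⟩ := hr C' hC'.2 φ
  obtain ⟨ρ, rfl⟩ := hs.exists_lift ψ (h.homZero C' hC'.1 C hC _)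
  exact ⟨ρ, (Category.assoc _ _ _).symm⟩

lemma functoriallyFinite_inter {T' F' : Set A} (h : IsTorsionPair A T F)
    (h' : IsTorsionPair A T' F') (hT : FunctoriallyFinite A T) (hF' : FunctoriallyFinite A F') :
    FunctoriallyFinite A (T ∩ F') :=
  fun M => ⟨h.hasRightApprox_inter (fun f _ => h'.mem_torsionFree_of_mono f) (hF' M).1,
    h'.hasLeftApprox_inter (fun g _ => h.mem_torsion_of_epi g) (hT M).2⟩

end IsTorsionPair

end Approximation

section Extension

variable {A}

lemma exists_lift_pullback_of_projective {P x₀ M a E x : A} [Projective P] (p : P ⟶ x₀)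
    (μ : M ⟶ x₀) {k : a ⟶ E} {c : E ⟶ x} (hE : IsSES A k c) (χ : x₀ ⟶ x) (φ : M ⟶ E)
    (hφ : φ ≫ c = μ ≫ χ) :
    ∃ (η : P ⟶ E) (κ : pullback p μ ⟶ a),
      κ ≫ k = pullback.fst p μ ≫ η - pullback.snd p μ ≫ φ := by
  have := hE.epi
  let η := Projective.factorThru (p ≫ χ) c
  refine ⟨η, hE.exists_lift _ ?_⟩
  rw [Preadditive.sub_comp, Category.assoc, Projective.factorThru_comp, Category.assoc, hφ,
    pullback.condition_assoc, sub_self]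

lemma exists_desc_pushout_of_injective {I y₀ M y E f : A} [Injective I] (i : y₀ ⟶ I)
    (ν : y₀ ⟶ M) {k : y ⟶ E} {c : E ⟶ f} (hE : IsSES A k c) (χ : y ⟶ y₀) (φ : E ⟶ M)
    (hφ : k ≫ φ = χ ≫ ν) :
    ∃ (η : E ⟶ I) (κ : f ⟶ pushout ν i),
      c ≫ κ = η ≫ pushout.inr ν i - φ ≫ pushout.inl ν i := by
  have := hE.mono
  let η := Injective.factorThru (χ ≫ i) k
  refine ⟨η, hE.exists_desc _ ?_⟩
  rw [Preadditive.comp_sub, Injective.comp_factorThru_assoc, reassoc_of% hφ, Category.assoc,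
    pushout.condition, sub_self]

lemma hasLeftApprox_star [EnoughProjectives A] {S₁ S₂ : Set A}
    (hS₁ : ∀ N, HasLeftApprox A S₁ N) {M : A} (hM : HasLeftApprox A S₂ M) :
    HasLeftApprox A (star A S₁ S₂) M := by
  obtain ⟨x₀, μ, hx₀, hμ⟩ := hM
  let p := Projective.π x₀
  obtain ⟨j, hQ, hj⟩ := (isSES_kernel p).baseChange μ
  obtain ⟨a₀, ℓ, ha₀, hℓ⟩ := hS₁ (pullback p μ)
  obtain ⟨_, hE, -⟩ := (isSES_kernel p).cobaseChange (j ≫ ℓ)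
  obtain ⟨ε, hε⟩ := hQ.exists_desc
    (pullback.fst p μ ≫ pushout.inr _ _ - ℓ ≫ pushout.inl (j ≫ ℓ) (kernel.ι p)) (by
      rw [Preadditive.comp_sub, reassoc_of% hj, ← pushout.condition, Category.assoc, sub_self])
  refine ⟨_, ε, ⟨a₀, x₀, _, _, hE, ha₀, hx₀⟩, ?_⟩
  rintro E ⟨a, x, k, c, hs, ha, hx⟩ φ
  obtain ⟨χ, hχ⟩ := hμ x hx (φ ≫ c)
  obtain ⟨η, κ, hκ⟩ := exists_lift_pullback_of_projective p μ hs χ φ hχ.symm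
  obtain ⟨τ, rfl⟩ := hℓ a ha κ
  rw [Category.assoc] at hκ
  refine ⟨pushout.desc (τ ≫ k) η ?_, ?_⟩
  · rw [Category.assoc, hκ, Preadditive.comp_sub, reassoc_of% hj, reassoc_of% hQ.w, zero_comp,
      sub_zero]
  · have := hQ.epi
    rw [← cancel_epi (pullback.snd p μ), reassoc_of% hε, Preadditive.sub_comp, Category.assoc,
      pushout.inr_desc, Category.assoc, pushout.inl_desc, hκ, sub_sub_cancel]

lemma hasRightApprox_star [EnoughInjectives A] {S₁ S₂ : Set A}
    (hS₂ : ∀ N, HasRightApprox A S₂ N) {M : A} (hM : HasRightApprox A S₁ M) :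
    HasRightApprox A (star A S₁ S₂) M := by
  obtain ⟨y₀, ν, hy₀, hν⟩ := hM
  let i := Injective.ι y₀
  obtain ⟨q, hQ, hq⟩ := (isSES_cokernel i).cobaseChange ν
  obtain ⟨f₀, r, hf₀, hr⟩ := hS₂ (pushout ν i)
  obtain ⟨_, hE, -⟩ := (isSES_cokernel i).baseChange (r ≫ q)
  obtain ⟨ε, hε⟩ := hQ.exists_lift
    (pullback.fst _ _ ≫ pushout.inr ν i - pullback.snd (cokernel.π i) (r ≫ q) ≫ r) (by
      rw [Preadditive.sub_comp, Category.assoc, Category.assoc, hq, pullback.condition, sub_self])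
  refine ⟨_, ε, ⟨y₀, f₀, _, _, hE, hy₀, hf₀⟩, ?_⟩
  rintro E ⟨y, f, k, c, hs, hy, hf⟩ φ
  obtain ⟨χ, hχ⟩ := hν y hy (k ≫ φ)
  obtain ⟨η, κ, hκ⟩ := exists_desc_pushout_of_injective i ν hs χ φ hχ.symm
  obtain ⟨τ, rfl⟩ := hr f hf κ
  rw [← Category.assoc] at hκ
  refine ⟨pullback.lift η (c ≫ τ) ?_, ?_⟩
  · rw [← Category.assoc, hκ, Preadditive.sub_comp, Category.assoc, hq, Category.assoc, hQ.w,
      comp_zero, sub_zero]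
  · have := hQ.mono
    rw [← cancel_mono (pushout.inl ν i), Category.assoc, hε, Preadditive.comp_sub,
      pullback.lift_fst_assoc, pullback.lift_snd_assoc, hκ, sub_sub_cancel]

end Extension

namespace IsTorsionPairIn

variable {A} {H X Y : Set A}

lemma subset_left (h : IsTorsionPairIn A H X Y) : X ⊆ H := h.1

lemma subset_right (h : IsTorsionPairIn A H X Y) : Y ⊆ H := h.2.1

lemma isoClosed_left (h : IsTorsionPairIn A H X Y) : IsoClosed A X := h.2.2.1

lemma isoClosed_right (h : IsTorsionPairIn A H X Y) : IsoClosed A Y := h.2.2.2.1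

lemma homZero (h : IsTorsionPairIn A H X Y) : HomZero X Y := h.2.2.2.2.1

lemma exists_isSES (h : IsTorsionPairIn A H X Y) {M : A} (hM : M ∈ H) :
    ∃ (B C : A) (f : B ⟶ M) (g : M ⟶ C), IsSES A f g ∧ B ∈ X ∧ C ∈ Y :=
  h.2.2.2.2.2 M hM

lemma zero_mem_left (h : IsTorsionPairIn A H X Y) {Z : A} (hZ : IsZero Z) (hZH : Z ∈ H) :
    Z ∈ X := by
  obtain ⟨B, C, f, g, hs, hB, -⟩ := h.exists_isSES hZH
  have := hs.mono
  exact h.isoClosed_left ((IsZero.of_mono f hZ).iso hZ) hB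

end IsTorsionPairIn

section Interval

open ZeroObject

variable {A} {T₁ F₁ T₂ F₂ T F X Y : Set A}

lemma IsTorsionPair.isTorsionPairIn_inter (h : IsTorsionPair A T F)
    (h₁ : IsTorsionPair A T₁ F₁) (h₂ : IsTorsionPair A T₂ F₂) (hT₁T : T₁ ⊆ T) (hTT₂ : T ⊆ T₂) :
    IsTorsionPairIn A (T₂ ∩ F₁) (T ∩ F₁) (T₂ ∩ F) := by
  refine ⟨Set.inter_subset_inter_left _ hTT₂,
    Set.inter_subset_inter_right _ (h₁.torsionFree_subset h hT₁T),
    fun _ _ e hM => ⟨h.1 e hM.1, h₁.2.1 e hM.2⟩, fun _ _ e hM => ⟨h₂.1 e hM.1, h.2.1 e hM.2⟩,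
    h.homZero.mono Set.inter_subset_left Set.inter_subset_right, ?_⟩
  rintro M ⟨hMT₂, hMF₁⟩
  obtain ⟨B, C, f, g, hs, hB, hC⟩ := h.exists_isSES M
  have := hs.mono
  have := hs.epi
  exact ⟨B, C, f, g, hs, ⟨hB, h₁.mem_torsionFree_of_mono f hMF₁⟩,
    ⟨h₂.mem_torsion_of_epi g hMT₂, hC⟩⟩

lemma star_inter_torsionFree (h₁ : IsTorsionPair A T₁ F₁) (h : IsTorsionPair A T F)
    (hT₁T : T₁ ⊆ T) : star A T₁ (T ∩ F₁) = T := by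
  refine (h.star_subset_torsion hT₁T Set.inter_subset_left).antisymm fun M hM => ?_
  obtain ⟨B, C, f, g, hs, hB, hC⟩ := h₁.exists_isSES M
  have := hs.epi
  exact ⟨B, C, f, g, hs, hB, h.mem_torsion_of_epi g hM, hC⟩

lemma star_torsion_inter (h₂ : IsTorsionPair A T₂ F₂) (h : IsTorsionPair A T F)
    (hTT₂ : T ⊆ T₂) : star A (T₂ ∩ F) F₂ = F := by
  refine (h.star_subset_torsionFree Set.inter_subset_right
    (h.torsionFree_subset h₂ hTT₂)).antisymm fun M hM => ?_
  obtain ⟨B, C, f, g, hs, hB, hC⟩ := h₂.exists_isSES M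
  have := hs.mono
  exact ⟨B, C, f, g, hs, ⟨hB, h.mem_torsionFree_of_mono f hM⟩, hC⟩

namespace IsTorsionPairIn

lemma star_inter (hXY : IsTorsionPairIn A (T₂ ∩ F₁) X Y) (h₁ : IsTorsionPair A T₁ F₁) :
    star A T₁ X ∩ F₁ = X := by
  refine Set.Subset.antisymm ?_ fun M hM =>
    ⟨subset_star_right (isZero_zero A) (h₁.zero_mem_torsion (isZero_zero A)) hM,
      (hXY.subset_left hM).2⟩
  rintro M ⟨⟨B, C, f, g, hs, hB, hC⟩, hM⟩
  have := hs.mono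
  have := hs.isIso_g (h₁.isZero_of_mem_of_mem hB (h₁.mem_torsionFree_of_mono f hM))
  exact hXY.isoClosed_left (asIso g).symm hC

lemma inter_star (hXY : IsTorsionPairIn A (T₂ ∩ F₁) X Y) (h₂ : IsTorsionPair A T₂ F₂) :
    T₂ ∩ star A Y F₂ = Y := by
  refine Set.Subset.antisymm ?_ fun M hM =>
    ⟨(hXY.subset_right hM).1,
      subset_star_left (isZero_zero A) (h₂.zero_mem_torsionFree (isZero_zero A)) hM⟩
  rintro M ⟨hM, ⟨B, C, f, g, hs, hB, hC⟩⟩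
  have := hs.epi
  have := hs.isIso_f (h₂.isZero_of_mem_of_mem (h₂.mem_torsion_of_epi g hM) hC)
  exact hXY.isoClosed_right (asIso f) hB

lemma torsion_subset_star (hXY : IsTorsionPairIn A (T₂ ∩ F₁) X Y) (h₁ : IsTorsionPair A T₁ F₁)
    (h₂ : IsTorsionPair A T₂ F₂) : T₁ ⊆ star A T₁ X :=
  subset_star_left (isZero_zero A) <| hXY.zero_mem_left (isZero_zero A)
    ⟨h₂.zero_mem_torsion (isZero_zero A), h₁.zero_mem_torsionFree (isZero_zero A)⟩

/-- The torsion part of `M` is the kernel of `t₂M ↠ h₀ ↠ y`, where `h₀ = t₂M / t₁(t₂M)` lies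
in the heart and `y` is its `Y`-part. -/
lemma isTorsionPair_star (hXY : IsTorsionPairIn A (T₂ ∩ F₁) X Y) (h₁ : IsTorsionPair A T₁ F₁)
    (h₂ : IsTorsionPair A T₂ F₂) (h12 : T₁ ⊆ T₂) :
    IsTorsionPair A (star A T₁ X) (star A Y F₂) := by
  have hXT₂ : X ⊆ T₂ := fun _ hM => (hXY.subset_left hM).1
  have hYF₁ : Y ⊆ F₁ := fun _ hM => (hXY.subset_right hM).2
  refine ⟨star_isoClosed _ _, star_isoClosed _ _,
    HomZero.star_left
      (.star_right (h₁.homZero.mono subset_rfl hYF₁) (h₂.homZero.mono h12 subset_rfl))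
      (.star_right hXY.homZero (h₂.homZero.mono hXT₂ subset_rfl)), fun M => ?_⟩
  obtain ⟨t, f₂, jt, pf₂, hs₂, ht, hf₂⟩ := h₂.exists_isSES M
  obtain ⟨a, h₀, ia, ph, hs₁, ha, hh₀⟩ := h₁.exists_isSES t
  have := hs₁.epi
  obtain ⟨x, y, fx, gy, hsH, hx, hy⟩ := hXY.exists_isSES ⟨h₂.mem_torsion_of_epi ph ht, hh₀⟩
  have := hsH.epi
  have := hs₂.mono
  have hK := isSES_kernel (ph ≫ gy)
  have hMK := isSES_cokernel (kernel.ι (ph ≫ gy) ≫ jt)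
  obtain ⟨α, β, hαβ, -, -⟩ := exists_isSES_kernel_comp hs₁ hsH hK
  obtain ⟨u, v, huv, -, -⟩ := exists_isSES_third_iso hK hMK hs₂
  exact ⟨_, _, _, _, hMK, ⟨a, x, α, β, hαβ, ha, hx⟩, ⟨y, f₂, u, v, huv, hy, hf₂⟩⟩

end IsTorsionPairIn

end Interval

/-- the bijection restricted to functorially finite torsion pairs.
Let `A` be an abelian category with enough projectives and enough injectives, and let
`t₁ = (T₁, F₁) ≤ t₂ = (T₂, F₂)` be torsion pairs in `A` whose four classes are all
functorially finite; set `H = T₂ ∩ F₁`.  Then `Φ(T, F) = (T ∩ F₁, T₂ ∩ F)` and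
`Ψ(X, Y) = (T₁ ∗ X, Y ∗ F₂)` restrict to mutually inverse, order-preserving bijections
between functorially finite torsion pairs `(T, F)` in `A` with `T₁ ⊆ T ⊆ T₂` and torsion
pairs in `H` whose classes are functorially finite in the full subcategory on `H`. -/
theorem stmt15 [EnoughProjectives A] [EnoughInjectives A]
    (T₁ F₁ T₂ F₂ : Set A)
    (h₁ : IsTorsionPair A T₁ F₁) (h₂ : IsTorsionPair A T₂ F₂) (h12 : T₁ ⊆ T₂)
    (hT₁ : FunctoriallyFinite A T₁) (hF₁ : FunctoriallyFinite A F₁)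
    (hT₂ : FunctoriallyFinite A T₂) (hF₂ : FunctoriallyFinite A F₂) :
    -- `Φ` is well defined on functorially finite torsion pairs in the interval
    (∀ T F : Set A, IsTorsionPair A T F → T₁ ⊆ T → T ⊆ T₂ →
      FunctoriallyFinite A T → FunctoriallyFinite A F →
      IsTorsionPairIn A (T₂ ∩ F₁) (T ∩ F₁) (T₂ ∩ F) ∧
        FunctoriallyFiniteIn A (T₂ ∩ F₁) (T ∩ F₁) ∧
        FunctoriallyFiniteIn A (T₂ ∩ F₁) (T₂ ∩ F)) ∧
    -- `Ψ` is well defined on relatively functorially finite torsion pairs in the heart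
    (∀ X Y : Set A, IsTorsionPairIn A (T₂ ∩ F₁) X Y →
      FunctoriallyFiniteIn A (T₂ ∩ F₁) X → FunctoriallyFiniteIn A (T₂ ∩ F₁) Y →
      IsTorsionPair A (star A T₁ X) (star A Y F₂) ∧
        T₁ ⊆ star A T₁ X ∧ star A T₁ X ⊆ T₂ ∧
        FunctoriallyFinite A (star A T₁ X) ∧ FunctoriallyFinite A (star A Y F₂)) ∧
    -- `Ψ ∘ Φ = id`
    (∀ T F : Set A, IsTorsionPair A T F → T₁ ⊆ T → T ⊆ T₂ →
      FunctoriallyFinite A T → FunctoriallyFinite A F →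
      star A T₁ (T ∩ F₁) = T ∧ star A (T₂ ∩ F) F₂ = F) ∧
    -- `Φ ∘ Ψ = id`
    (∀ X Y : Set A, IsTorsionPairIn A (T₂ ∩ F₁) X Y →
      FunctoriallyFiniteIn A (T₂ ∩ F₁) X → FunctoriallyFiniteIn A (T₂ ∩ F₁) Y →
      (star A T₁ X) ∩ F₁ = X ∧ T₂ ∩ (star A Y F₂) = Y) ∧
    -- `Φ` is order-preserving
    (∀ T T' : Set A, T ⊆ T' → T ∩ F₁ ⊆ T' ∩ F₁) ∧
    -- `Ψ` is order-preserving
    (∀ X X' : Set A, X ⊆ X' → star A T₁ X ⊆ star A T₁ X') := by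
  have hH : FunctoriallyFinite A (T₂ ∩ F₁) := h₂.functoriallyFinite_inter h₁ hT₂ hF₁
  refine ⟨fun T F h hT₁T hTT₂ hT hF => ⟨h.isTorsionPairIn_inter h₁ h₂ hT₁T hTT₂,
      (h.functoriallyFinite_inter h₁ hT hF₁).functoriallyFiniteIn _,
      (h₂.functoriallyFinite_inter h hT₂ hF).functoriallyFiniteIn _⟩,
    fun X Y hXY hX hY => ?_,
    fun T F h hT₁T hTT₂ _ _ => ⟨star_inter_torsionFree h₁ h hT₁T, star_torsion_inter h₂ h hTT₂⟩,
    fun X Y hXY _ _ => ⟨hXY.star_inter h₁, hXY.inter_star h₂⟩,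
    fun _ _ hTT' => Set.inter_subset_inter_left _ hTT', fun _ _ => star_mono_right⟩
  have hΨ := hXY.isTorsionPair_star h₁ h₂ h12
  have hX' := hX.functoriallyFinite hXY.subset_left hH
  have hY' := hY.functoriallyFinite hXY.subset_right hH
  exact ⟨hΨ, hXY.torsion_subset_star h₁ h₂,
    h₂.star_subset_torsion h12 fun _ hM => (hXY.subset_left hM).1,
    fun M => ⟨hΨ.hasRightApprox_torsion M, hasLeftApprox_star (fun N => (hT₁ N).2) (hX' M).2⟩,
    fun M => ⟨hasRightApprox_star (fun N => (hF₂ N).1) (hY' M).1, hΨ.hasLeftApprox_torsionFree M⟩⟩
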